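/- For α ∈ (0,1) with β := α − 1 − log α ≥ log 2, and k ≥ 1, the quantity γ := (1/(αk))·Σ_{j=k+1}^n (2k − 1 + j)·P(Bin(n, αk/n) = j) satisfies αk·γ ≤ (3k + 1)·e^{−(k+1)β}. In particular, for fixed α, γ → 0 as k → ∞. -/
import Mathlib

open Finset

/-- The point mass `P(Bin(n,p) = j)` of the binomial distribution. -/
noncomputable def binomPMF (n : ℕ) (p : ℝ) (j : ℕ) : ℝ :=
  (n.choose j : ℝ) * p ^ j * (1 - p) ^ (n - j)

/-- The quantity `γ_{n,k}(α) = (1/α) Σ_{j=k+1}^n (2 + (j−1)/k) P(Bin(n, αk/n) = j)`,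
written here as `(1/(αk)) Σ_{j=k+1}^n (2k − 1 + j) P(Bin(n, αk/n) = j)`. -/
noncomputable def gammaNK (n k : ℕ) (α : ℝ) : ℝ :=
  (1 / (α * k)) * ∑ j ∈ Finset.Icc (k + 1) n,
    (2 * (k : ℝ) - 1 + j) * binomPMF n (α * k / n) j

lemma binomPMF_nonneg {n : ℕ} {p : ℝ} (hp0 : 0 ≤ p) (hp1 : p ≤ 1) (j : ℕ) :
    0 ≤ binomPMF n p j := by
  have h1 : (0:ℝ) ≤ 1 - p := by linarith
  unfold binomPMF
  positivity

lemma chernoff (n m : ℕ) (p c : ℝ) (hp0 : 0 ≤ p) (hp1 : p ≤ 1) (hc : 1 ≤ c) :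
    c ^ m * ∑ i ∈ Icc m n, binomPMF n p i ≤ (1 - p + p * c) ^ n := by
  have hc0 : (0:ℝ) ≤ c := le_trans zero_le_one hc
  calc c ^ m * ∑ i ∈ Icc m n, binomPMF n p i
      = ∑ i ∈ Icc m n, c ^ m * binomPMF n p i := by rw [mul_sum]
    _ ≤ ∑ i ∈ Icc m n, c ^ i * binomPMF n p i := by
        apply sum_le_sum
        intro i hi
        exact mul_le_mul_of_nonneg_right (pow_le_pow_right₀ hc (mem_Icc.mp hi).1)
          (binomPMF_nonneg hp0 hp1 i)
    _ ≤ ∑ i ∈ range (n+1), c ^ i * binomPMF n p i := by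
        apply sum_le_sum_of_subset_of_nonneg
        · intro i hi
          simp only [mem_Icc, mem_range] at *
          omega
        · intro i _ _
          exact mul_nonneg (pow_nonneg hc0 i) (binomPMF_nonneg hp0 hp1 i)
    _ = (p * c + (1 - p)) ^ n := by
        rw [add_pow]
        apply sum_congr rfl
        intro i _
        unfold binomPMF
        rw [mul_pow]
        ring
    _ = (1 - p + p * c) ^ n := by ring_nf

lemma tail_bound (α : ℝ) (hα0 : 0 < α) (hα1 : α < 1) (n k m : ℕ) (hk : 1 ≤ k)
    (hkn : α * k < n) (hm : k ≤ m) :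
    ∑ i ∈ Icc m n, binomPMF n (α * k / n) i ≤
      Real.exp (-(m : ℝ) * (α - 1 - Real.log α)) := by
  have hk1 : (1:ℝ) ≤ (k:ℝ) := by exact_mod_cast hk
  have hαk : (0:ℝ) < α * k := by nlinarith
  have hn0 : (0:ℝ) < (n:ℝ) := lt_trans hαk hkn
  set p : ℝ := α * k / n with hp
  have hp0 : 0 ≤ p := by positivity
  have hp1 : p ≤ 1 := le_of_lt ((div_lt_one hn0).mpr hkn)
  have hc : (1:ℝ) ≤ 1 / α := by
    rw [le_div_iff₀ hα0]; linarith
  have hcm : (0:ℝ) < (1/α) ^ m := by positivity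
  have h1 := chernoff n m p (1/α) hp0 hp1 hc
  have hpc : 1 - p + p * (1/α) = 1 + (k:ℝ) * (1 - α) / n := by
    rw [hp]; field_simp; ring
  have hbase : (0:ℝ) ≤ 1 + (k:ℝ) * (1 - α) / n := by
    have : (0:ℝ) ≤ (k:ℝ) * (1 - α) / n := div_nonneg (by nlinarith) (le_of_lt hn0)
    linarith
  have h2 : (1 - p + p * (1/α)) ^ n ≤ Real.exp ((k:ℝ) * (1 - α)) := by
    rw [hpc]
    calc (1 + (k:ℝ) * (1 - α) / n) ^ n
        ≤ Real.exp ((k:ℝ) * (1 - α) / n) ^ n := by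
          apply pow_le_pow_left₀ hbase
          have := Real.add_one_le_exp ((k:ℝ) * (1 - α) / n)
          linarith
      _ = Real.exp ((n:ℝ) * ((k:ℝ) * (1 - α) / n)) := by
          rw [← Real.exp_nat_mul]
      _ = Real.exp ((k:ℝ) * (1 - α)) := by
          congr 1
          field_simp
  have h3 : ∑ i ∈ Icc m n, binomPMF n p i ≤ Real.exp ((k:ℝ) * (1 - α)) * α ^ m := by
    have := (le_div_iff₀' hcm).mpr (h1.trans h2)
    calc ∑ i ∈ Icc m n, binomPMF n p i ≤ Real.exp ((k:ℝ) * (1 - α)) / (1/α) ^ m := this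
      _ = Real.exp ((k:ℝ) * (1 - α)) * α ^ m := by
          rw [div_pow, one_pow, div_div_eq_mul_div, div_one]
  refine h3.trans ?_
  have hαm : α ^ m = Real.exp ((m:ℝ) * Real.log α) := by
    rw [← Real.log_pow, Real.exp_log (by positivity)]
  rw [hαm, ← Real.exp_add]
  apply Real.exp_le_exp.mpr
  have hmk : (k:ℝ) ≤ (m:ℝ) := by exact_mod_cast hm
  nlinarith [hmk, hα1]

/-- if `β := α − 1 − log α ≥ log 2` and `k ≥ 1`, then
`αk·γ_{n,k}(α) ≤ (3k + 1) e^{−(k+1)β}`; in particular, for fixed `α`,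
`γ_{n,k}(α) → 0` as `k → ∞` (uniformly in `n`). -/
theorem gamma_bound (α : ℝ) (hα0 : 0 < α) (hα1 : α < 1)
    (hβ : Real.log 2 ≤ α - 1 - Real.log α) :
    (∀ n k : ℕ, 1 ≤ k → α * k < n →
        α * k * gammaNK n k α ≤
          (3 * (k : ℝ) + 1) * Real.exp (-((k : ℝ) + 1) * (α - 1 - Real.log α))) ∧
      ∀ ε : ℝ, 0 < ε → ∃ K : ℕ, ∀ k ≥ K, ∀ n : ℕ, α * k < n → gammaNK n k α < ε := by
  set β : ℝ := α - 1 - Real.log α with hβdef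
  have hlog2 : (0:ℝ) < Real.log 2 := Real.log_pos one_lt_two
  have hβ0 : 0 < β := lt_of_lt_of_le hlog2 hβ
  set r : ℝ := Real.exp (-β) with hrdef
  have hr0 : 0 < r := Real.exp_pos _
  have hr2 : r ≤ 1/2 := by
    rw [hrdef]
    calc Real.exp (-β) ≤ Real.exp (-Real.log 2) := Real.exp_le_exp.mpr (by linarith)
      _ = 1/2 := by
          rw [Real.exp_neg, Real.exp_log (by norm_num : (0:ℝ) < 2)]
          norm_num
  -- main bound
  have main : ∀ n k : ℕ, 1 ≤ k → α * k < n →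
      α * k * gammaNK n k α ≤ (3 * (k : ℝ) + 1) * Real.exp (-((k : ℝ) + 1) * β) := by
    intro n k hk hkn
    have hk1 : (1:ℝ) ≤ (k:ℝ) := by exact_mod_cast hk
    have hαk : (0:ℝ) < α * k := by nlinarith
    have hn0 : (0:ℝ) < (n:ℝ) := lt_trans hαk hkn
    set p : ℝ := α * k / n with hp
    have hp0 : 0 ≤ p := by positivity
    have hp1 : p ≤ 1 := le_of_lt ((div_lt_one hn0).mpr hkn)
    have hPnn : ∀ j, 0 ≤ binomPMF n p j := binomPMF_nonneg hp0 hp1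
    have hLHS : α * k * gammaNK n k α =
        ∑ j ∈ Icc (k + 1) n, (2 * (k : ℝ) - 1 + j) * binomPMF n p j := by
      rw [gammaNK, ← mul_assoc, mul_one_div, div_self (ne_of_gt hαk), one_mul]
    rw [hLHS]
    -- tail bound specialized
    have tb : ∀ m : ℕ, k ≤ m → ∑ i ∈ Icc m n, binomPMF n p i ≤ r ^ m := by
      intro m hm
      have := tail_bound α hα0 hα1 n k m hk hkn hm
      rw [hrdef, ← Real.exp_nat_mul]
      calc ∑ i ∈ Icc m n, binomPMF n p i ≤ Real.exp (-(m:ℝ) * β) := this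
        _ = Real.exp ((m:ℝ) * -β) := by ring_nf
    -- split the sum
    have hsplit : ∑ j ∈ Icc (k + 1) n, (2 * (k : ℝ) - 1 + j) * binomPMF n p j =
        (3 * (k:ℝ)) * (∑ j ∈ Icc (k + 1) n, binomPMF n p j)
        + ∑ j ∈ Icc (k + 1) n, ((j:ℝ) - (k + 1)) * binomPMF n p j := by
      rw [mul_sum, ← sum_add_distrib]
      apply sum_congr rfl
      intro j _
      ring
    rw [hsplit]
    -- second sum equals sum of tails
    have hswap : ∑ j ∈ Icc (k + 1) n, ((j:ℝ) - (k + 1)) * binomPMF n p j =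
        ∑ m ∈ Icc (k + 2) n, ∑ j ∈ Icc m n, binomPMF n p j := by
      have step1 : ∀ m ∈ Icc (k + 2) n,
          ∑ j ∈ Icc m n, binomPMF n p j =
          ∑ j ∈ Icc (k + 1) n, (if m ≤ j then binomPMF n p j else 0) := by
        intro m hm
        rw [mem_Icc] at hm
        rw [sum_ite, sum_const_zero, add_zero]
        apply sum_congr _ (fun _ _ => rfl)
        ext j
        simp only [mem_Icc, mem_filter]
        omega
      rw [sum_congr rfl step1, sum_comm]
      apply sum_congr rfl
      intro j hj
      rw [mem_Icc] at hj
      obtain ⟨d, rfl⟩ : ∃ d, j = k + 1 + d := ⟨j - (k + 1), by omega⟩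
      have hfil : (Icc (k + 2) n).filter (fun m => m ≤ k + 1 + d) = Icc (k + 2) (k + 1 + d) := by
        ext m
        simp only [mem_Icc, mem_filter]
        omega
      rw [sum_ite, sum_const_zero, add_zero, sum_const, nsmul_eq_mul, hfil, Nat.card_Icc]
      have hcard : k + 1 + d + 1 - (k + 2) = d := by omega
      rw [hcard]
      push_cast
      ring
    rw [hswap]
    -- geometric bound on the tail sums
    have geo : ∀ N : ℕ, ∑ m ∈ Icc (k + 2) N, r ^ m ≤ r ^ (k + 1) := by
      intro N
      rcases le_or_gt N (k + 1) with hN | hN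
      · rw [Icc_eq_empty (by omega), sum_empty]
        positivity
      · have key : ∀ N, k + 1 ≤ N → ∑ m ∈ Icc (k + 2) N, r ^ m ≤ r ^ (k + 1) - r ^ N := by
          intro N hN
          induction N, hN using Nat.le_induction with
          | base => rw [Icc_eq_empty (by omega), sum_empty]; simp
          | succ N hN ih =>
            rw [Finset.sum_Icc_succ_top (by omega)]
            have hrN : r ^ (N + 1) ≤ (1/2) * r ^ N := by
              rw [pow_succ]
              calc r ^ N * r ≤ r ^ N * (1/2) := by
                    apply mul_le_mul_of_nonneg_left hr2 (by positivity)
                _ = (1/2) * r ^ N := by ring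
            have := ih
            nlinarith [pow_nonneg (le_of_lt hr0) N]
        have := key N (by omega)
        nlinarith [pow_nonneg (le_of_lt hr0) N]
    have hsum2 : ∑ m ∈ Icc (k + 2) n, ∑ j ∈ Icc m n, binomPMF n p j ≤ r ^ (k + 1) := by
      calc ∑ m ∈ Icc (k + 2) n, ∑ j ∈ Icc m n, binomPMF n p j
          ≤ ∑ m ∈ Icc (k + 2) n, r ^ m := by
            apply sum_le_sum
            intro m hm
            rw [mem_Icc] at hm
            exact tb m (by omega)
        _ ≤ r ^ (k + 1) := geo n
    have hsum1 : ∑ j ∈ Icc (k + 1) n, binomPMF n p j ≤ r ^ (k + 1) := tb (k + 1) (by omega)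
    have hrk : r ^ (k + 1) = Real.exp (-((k : ℝ) + 1) * β) := by
      rw [hrdef, ← Real.exp_nat_mul]
      congr 1
      push_cast
      ring
    rw [← hrk]
    have h3k : (0:ℝ) ≤ 3 * (k:ℝ) := by positivity
    calc (3 * (k:ℝ)) * (∑ j ∈ Icc (k + 1) n, binomPMF n p j)
          + ∑ m ∈ Icc (k + 2) n, ∑ j ∈ Icc m n, binomPMF n p j
        ≤ (3 * (k:ℝ)) * r ^ (k + 1) + r ^ (k + 1) := by
          apply add_le_add _ hsum2
          exact mul_le_mul_of_nonneg_left hsum1 h3k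
      _ = (3 * (k:ℝ) + 1) * r ^ (k + 1) := by ring
  refine ⟨main, ?_⟩
  -- second part: convergence to 0
  intro ε hε
  have htend : Filter.Tendsto (fun k : ℕ => (3 * (k:ℝ) + 1) * (1/2) ^ (k + 1) / α)
      Filter.atTop (nhds 0) := by
    have h1 : Filter.Tendsto (fun k : ℕ => (k:ℝ) * (1/2) ^ k) Filter.atTop (nhds 0) := by
      simpa using tendsto_pow_const_mul_const_pow_of_lt_one 1
        (by norm_num : (0:ℝ) ≤ 1/2) (by norm_num)
    have h2 : Filter.Tendsto (fun k : ℕ => ((1:ℝ)/2) ^ k) Filter.atTop (nhds 0) :=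
      tendsto_pow_atTop_nhds_zero_of_lt_one (by norm_num) (by norm_num)
    have h3 : Filter.Tendsto (fun k : ℕ => (3 * ((k:ℝ) * (1/2)^k) + (1/2)^k) * (1/2) / α)
        Filter.atTop (nhds 0) := by
      have := ((h1.const_mul 3).add h2).mul_const ((1:ℝ)/2) |>.div_const α
      simpa using this
    apply h3.congr
    intro k
    ring
  have hev : ∀ᶠ k : ℕ in Filter.atTop,
      (3 * (k:ℝ) + 1) * (1/2) ^ (k + 1) / α < ε := by
    exact htend.eventually (gt_mem_nhds hε)
  rcases (hev.and (Filter.eventually_ge_atTop 1)).exists_forall_of_atTop with ⟨K, hK⟩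
  refine ⟨K, fun k hk n hkn => ?_⟩
  obtain ⟨hKε, hk1⟩ := hK k hk
  have hk1' : (1:ℝ) ≤ (k:ℝ) := by exact_mod_cast hk1
  have hαk : (0:ℝ) < α * k := by nlinarith
  have hmain := main n k hk1 hkn
  have hexp : Real.exp (-((k : ℝ) + 1) * β) ≤ (1/2) ^ (k + 1) := by
    have : Real.exp (-((k : ℝ) + 1) * β) ≤ Real.exp (-((k : ℝ) + 1) * Real.log 2) := by
      apply Real.exp_le_exp.mpr
      have hkpos : (0:ℝ) < (k:ℝ) + 1 := by linarith
      nlinarith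
    calc Real.exp (-((k : ℝ) + 1) * β) ≤ Real.exp (-((k : ℝ) + 1) * Real.log 2) := this
      _ = ((1:ℝ)/2) ^ (k + 1) := by
          rw [show -((k : ℝ) + 1) * Real.log 2 = ((k+1 : ℕ):ℝ) * (-Real.log 2) by push_cast; ring,
            Real.exp_nat_mul, Real.exp_neg, Real.exp_log (by norm_num : (0:ℝ) < 2)]
          norm_num
  have hb : α * k * gammaNK n k α ≤ (3 * (k:ℝ) + 1) * (1/2) ^ (k + 1) := by
    calc α * k * gammaNK n k α ≤ (3 * (k:ℝ) + 1) * Real.exp (-((k : ℝ) + 1) * β) := hmain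
      _ ≤ (3 * (k:ℝ) + 1) * (1/2) ^ (k + 1) := by
          apply mul_le_mul_of_nonneg_left hexp (by positivity)
  have hγ : gammaNK n k α ≤ (3 * (k:ℝ) + 1) * (1/2) ^ (k + 1) / (α * k) :=
    (le_div_iff₀ hαk).mpr (by linarith [hb, mul_comm (α * k) (gammaNK n k α)])
  have hfin : (3 * (k:ℝ) + 1) * (1/2) ^ (k + 1) / (α * k) ≤
      (3 * (k:ℝ) + 1) * (1/2) ^ (k + 1) / α := by
    apply div_le_div_of_nonneg_left (by positivity) hα0
    nlinarith
  calc gammaNK n k α ≤ _ := hγ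
    _ ≤ _ := hfin
    _ < ε := hKε
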